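/- arXiv:1708.08538 — 3 statements merged into one kernel-verified Lean document; each statement's English description precedes it below -/
import Mathlib

section
/- For any n ∈ Γ and λ ∈ 𝕋, the set A(n,λ) = {x ∈ S(c₀(Γ)) : x(n) = λ} is a maximal convex subset of the unit sphere S(c₀(Γ)). -/
open ZeroAtInfty Metric

/-!
`A(n, λ)` is the intersection of the closed unit ball with the affine hyperplane `x n = λ`,
hence convex. For maximality, let `C ⊇ A(n, λ)` be a convex subset of the sphere and `y ∈ C`.
The function `λ δₙ` lies in `A(n, λ) ⊆ C`, so the midpoint of `λ δₙ` and `y` has norm one, i.e.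
`‖λ δₙ + y‖ = 2`. Away from `n` the sum has modulus at most `‖y‖ = 1`, so `‖λ + y n‖ = 2`, and
strict convexity of `ℂ` forces `y n = λ`.
-/

theorem eq_of_norm_le_of_norm_add_eq_two_mul {E : Type*} [NormedAddCommGroup E]
    [NormedSpace ℝ E] [StrictConvexSpace ℝ E] {x y : E} (hle : ‖y‖ ≤ ‖x‖)
    (hadd : ‖x + y‖ = 2 * ‖x‖) : x = y := by
  have hy : ‖y‖ = ‖x‖ := le_antisymm hle (by linarith [norm_add_le x y])
  exact eq_of_norm_eq_of_norm_add_eq hy.symm (by rw [hadd, hy]; ring)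

theorem norm_add_eq_two_of_convex_subset_sphere {X : Type*} [SeminormedAddCommGroup X]
    [NormedSpace ℝ X] {C : Set X} (hC : C ⊆ sphere 0 1) (hconv : Convex ℝ C) {x y : X}
    (hx : x ∈ C) (hy : y ∈ C) : ‖x + y‖ = 2 := by
  have hmid : ‖(1 / 2 : ℝ) • x + (1 / 2 : ℝ) • y‖ = 1 :=
    mem_sphere_zero_iff_norm.mp (hC (hconv hx hy (by norm_num) (by norm_num) (by norm_num)))
  rw [← smul_add, norm_smul, Real.norm_of_nonneg (by norm_num)] at hmid
  linarith

namespace ZeroAtInftyContinuousMap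

variable {Γ E : Type*} [TopologicalSpace Γ] [NormedAddCommGroup E]

theorem norm_apply_le (f : C₀(Γ, E)) (k : Γ) : ‖f k‖ ≤ ‖f‖ :=
  norm_toBCF_eq_norm (f := f) ▸ f.toBCF.norm_coe_le_norm k

theorem norm_le {f : C₀(Γ, E)} {M : ℝ} (hM : 0 ≤ M) : ‖f‖ ≤ M ↔ ∀ k, ‖f k‖ ≤ M :=
  norm_toBCF_eq_norm (f := f) ▸ BoundedContinuousFunction.norm_le hM

theorem setOf_norm_eq_one_and_apply_eq {n : Γ} {v : E} (hv : ‖v‖ = 1) :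
    {x : C₀(Γ, E) | ‖x‖ = 1 ∧ x n = v} = closedBall 0 1 ∩ {x | x n = v} := by
  ext x
  simp only [Set.mem_ofPred_eq, Set.mem_inter_iff, mem_closedBall_zero_iff]
  refine ⟨fun ⟨h1, hn⟩ => ⟨h1.le, hn⟩, fun ⟨h1, hn⟩ => ⟨le_antisymm h1 ?_, hn⟩⟩
  simpa [hn, hv] using x.norm_apply_le n

theorem convex_setOf_norm_eq_one_and_apply_eq [NormedSpace ℝ E] {n : Γ} {v : E}
    (hv : ‖v‖ = 1) : Convex ℝ {x : C₀(Γ, E) | ‖x‖ = 1 ∧ x n = v} := by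
  rw [setOf_norm_eq_one_and_apply_eq hv]
  refine (convex_closedBall 0 1).inter fun x hx y hy a b _ _ hab => ?_
  simp only [Set.mem_ofPred_eq] at hx hy ⊢
  simp [hx, hy, ← add_smul, hab]

section single

variable [DiscreteTopology Γ] [DecidableEq Γ]

noncomputable def single (n : Γ) (v : E) : C₀(Γ, E) where
  toFun := (Pi.single n v : Γ → E)
  continuous_toFun := continuous_of_discreteTopology
  zero_at_infty' := HasCompactSupport.is_zero_at_infty <|
    HasCompactSupport.intro isCompact_singleton fun _ hk => Pi.single_eq_of_ne (M := fun _ => E) hk v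

@[simp]
theorem single_apply_self (n : Γ) (v : E) : single n v n = v :=
  Pi.single_eq_same (M := fun _ => E) n v

theorem single_apply_of_ne {n k : Γ} (hk : k ≠ n) (v : E) : single n v k = 0 :=
  Pi.single_eq_of_ne (M := fun _ => E) hk v

@[simp]
theorem norm_single (n : Γ) (v : E) : ‖single n v‖ = ‖v‖ := by
  refine le_antisymm ((norm_le (norm_nonneg v)).mpr fun k => ?_) ?_
  · by_cases hk : k = n
    · rw [hk, single_apply_self]
    · simp [single_apply_of_ne hk]
  · simpa using (single n v).norm_apply_le n

theorem norm_single_add_le (n : Γ) (v : E) (y : C₀(Γ, E)) :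
    ‖single n v + y‖ ≤ max ‖v + y n‖ ‖y‖ := by
  refine (norm_le (le_max_of_le_right (norm_nonneg y))).mpr fun k => ?_
  rw [add_apply]
  by_cases hk : k = n
  · rw [hk, single_apply_self]
    exact le_max_left _ _
  · rw [single_apply_of_ne hk, zero_add]
    exact le_max_of_le_right (y.norm_apply_le k)

theorem apply_eq_of_norm_single_add_eq_two [NormedSpace ℝ E] [StrictConvexSpace ℝ E]
    {n : Γ} {v : E} (hv : ‖v‖ = 1) {y : C₀(Γ, E)} (hy : ‖y‖ ≤ 1)
    (hadd : ‖single n v + y‖ = 2) : y n = v := by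
  have hle : 2 ≤ max ‖v + y n‖ ‖y‖ := hadd ▸ norm_single_add_le n v y
  have hvy : 2 ≤ ‖v + y n‖ := by
    rcases le_max_iff.mp hle with h | h
    · exact h
    · linarith
  have hyn : ‖y n‖ ≤ 1 := (y.norm_apply_le n).trans hy
  refine (eq_of_norm_le_of_norm_add_eq_two_mul (hv ▸ hyn) ?_).symm
  linarith [norm_add_le v (y n)]

end single

end ZeroAtInftyContinuousMap

open ZeroAtInftyContinuousMap

theorem A_maximal_convex_general {Γ : Type*} [TopologicalSpace Γ] [DiscreteTopology Γ]
    (n : Γ) (lam : ℂ) (hlam : ‖lam‖ = 1) :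
    Convex ℝ {x : C₀(Γ, ℂ) | ‖x‖ = 1 ∧ x n = lam} ∧
      ∀ C : Set C₀(Γ, ℂ), C ⊆ sphere (0 : C₀(Γ, ℂ)) 1 → Convex ℝ C →
        {x : C₀(Γ, ℂ) | ‖x‖ = 1 ∧ x n = lam} ⊆ C →
        C = {x : C₀(Γ, ℂ) | ‖x‖ = 1 ∧ x n = lam} := by
  classical
  refine ⟨convex_setOf_norm_eq_one_and_apply_eq hlam, fun C hC hconv hAC => ?_⟩
  refine Set.Subset.antisymm (fun y hy => ?_) hAC
  have hy1 : ‖y‖ = 1 := mem_sphere_zero_iff_norm.mp (hC hy)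
  have hsingle : single n lam ∈ C := hAC ⟨(norm_single n lam).trans hlam, single_apply_self n lam⟩
  exact ⟨hy1, apply_eq_of_norm_single_add_eq_two hlam hy1.le
    (norm_add_eq_two_of_convex_subset_sphere hC hconv hsingle hy)⟩

/-- For `n ∈ Γ` and unimodular `λ`, the set `A(n,λ) = {x ∈ S(c₀(Γ)) : x n = λ}` is a maximal
convex subset of the unit sphere of `c₀(Γ)`. -/
theorem A_maximal_convex {Γ : Type*} [TopologicalSpace Γ] [DiscreteTopology Γ] [Infinite Γ]
    (n : Γ) (lam : ℂ) (hlam : ‖lam‖ = 1) :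
    Convex ℝ {x : C₀(Γ, ℂ) | ‖x‖ = 1 ∧ x n = lam} ∧
      ∀ C : Set C₀(Γ, ℂ), C ⊆ sphere (0 : C₀(Γ, ℂ)) 1 → Convex ℝ C →
        {x : C₀(Γ, ℂ) | ‖x‖ = 1 ∧ x n = lam} ⊆ C →
        C = {x : C₀(Γ, ℂ) | ‖x‖ = 1 ∧ x n = lam} :=
  A_maximal_convex_general n lam hlam
end

section
/- Let X be a complex Banach space, Δ : S(c₀(Γ)) → S(X) a surjective isometry, n ∈ Γ, λ ∈ 𝕋, and φ ∈ X* a norm-one functional with φ⁻¹({1}) = Δ(A(n,λ)). Then φ(Δ(x)) = -1 for every x ∈ A(n,-λ). -/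
open ZeroAtInfty Metric

/-- The canonical basis vector `e n` of `c₀(Γ)`. -/
noncomputable def stdBasis {Γ : Type*} [TopologicalSpace Γ] [DiscreteTopology Γ] [DecidableEq Γ]
    (n : Γ) : C₀(Γ, ℂ) where
  toFun := fun k => if k = n then 1 else 0
  continuous_toFun := continuous_of_discreteTopology
  zero_at_infty' := by
    have h : (fun k => if k = n then (1 : ℂ) else 0) =ᶠ[Filter.cocompact Γ] 0 := by
      refine Filter.mem_cocompact.2 ⟨{n}, isCompact_singleton, ?_⟩
      intro k hk
      simp only [Set.mem_compl_iff, Set.mem_singleton_iff] at hk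
      simp [hk]
    exact Filter.Tendsto.congr' h.symm tendsto_const_nhds

/-!
Let `u` be the preimage of `-Δ x`; it suffices to show `u n = λ`, for then `-Δ x` lies in the
face `{φ = 1}`. Otherwise put `δ = |u n - λ|` and shrink `u` to a unit vector `y` with `y n = λ`,
`‖y - u‖ ≤ δ` and `|y k| ≤ 1 - δ/2` for `k ≠ n`. Since `‖y - x‖ = 2`, also `‖Δ y + Δ u‖ = 2`, so
the whole segment from `Δ y` to `Δ u` lies on the unit sphere of `X`. The preimage `v` of its point
a quarter of the way along has `|v k| ≤ 1 - δ/4` for `k ≠ n`, hence `|v n| = 1`; but `v n` lies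
strictly between `λ` and `u n` in the closed unit disc, which is strictly convex.
-/

lemma stdBasis_apply {Γ : Type*} [TopologicalSpace Γ] [DiscreteTopology Γ] [DecidableEq Γ]
    (n k : Γ) : stdBasis n k = if k = n then 1 else 0 :=
  rfl

lemma norm_lineMap_eq_one_of_two_le_norm_add {E : Type*} [SeminormedAddCommGroup E]
    [NormedSpace ℝ E] {a b : E} (ha : ‖a‖ ≤ 1) (hb : ‖b‖ ≤ 1) (hab : 2 ≤ ‖a + b‖) {t : ℝ}
    (ht₀ : 0 ≤ t) (ht₁ : t ≤ 1) : ‖AffineMap.lineMap a b t‖ = 1 := by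
  have combo_le : ∀ s : ℝ, 0 ≤ s → s ≤ 1 → ‖(1 - s) • a + s • b‖ ≤ 1 := fun s hs₀ hs₁ =>
    calc ‖(1 - s) • a + s • b‖ ≤ (1 - s) * ‖a‖ + s * ‖b‖ := by
          refine (norm_add_le _ _).trans ?_
          rw [norm_smul, norm_smul, Real.norm_of_nonneg (by linarith), Real.norm_of_nonneg hs₀]
      _ ≤ (1 - s) * 1 + s * 1 := by gcongr
      _ = 1 := by ring
  rw [AffineMap.lineMap_apply_module]
  refine le_antisymm (combo_le t ht₀ ht₁) ?_
  -- The mirror combination has norm at most one, and the two combinations add up to `a + b`.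
  have hsum : (1 - t) • a + t • b + ((1 - (1 - t)) • a + (1 - t) • b) = a + b := by module
  have := norm_add_le ((1 - t) • a + t • b) ((1 - (1 - t)) • a + (1 - t) • b)
  linarith [combo_le (1 - t) (by linarith) (by linarith), hsum ▸ this]

lemma norm_lt_of_dist_le_mul_of_dist_le_one_sub_mul {E : Type*} [NormedAddCommGroup E]
    [NormedSpace ℝ E] [StrictConvexSpace ℝ E] {a b c : E} {r t : ℝ} (ha : ‖a‖ ≤ r)
    (hc : ‖c‖ ≤ r) (hac : a ≠ c) (ht₀ : 0 < t) (ht₁ : t < 1) (hab : dist a b ≤ t * dist a c)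
    (hbc : dist b c ≤ (1 - t) * dist a c) : ‖b‖ < r := by
  have htri := dist_triangle a b c
  have hb : b = AffineMap.lineMap a c t :=
    eq_lineMap_of_dist_eq_mul_of_dist_eq_mul (by linarith) (by linarith)
  rw [hb, AffineMap.lineMap_apply_module]
  exact norm_combo_lt_of_ne ha hc hac (by linarith) ht₀ (by ring)

namespace ZeroAtInftyContinuousMap

variable {α β : Type*} [TopologicalSpace α] [SeminormedAddCommGroup β]

lemma norm_apply_le_s2 (f : C₀(α, β)) (x : α) : ‖f x‖ ≤ ‖f‖ := by
  rw [← norm_toBCF_eq_norm]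
  exact f.toBCF.norm_coe_le_norm x

lemma dist_apply_le (f g : C₀(α, β)) (x : α) : dist (f x) (g x) ≤ dist f g := by
  rw [dist_eq_norm, dist_eq_norm]
  exact norm_apply_le_s2 (f - g) x

lemma norm_le_of_forall_norm_apply_le {f : C₀(α, β)} {C : ℝ} (hC : 0 ≤ C)
    (h : ∀ x, ‖f x‖ ≤ C) : ‖f‖ ≤ C := by
  rw [← norm_toBCF_eq_norm]
  exact (BoundedContinuousFunction.norm_le hC).mpr h

lemma norm_apply_eq_norm_of_forall_ne_le {f : C₀(α, β)} {n : α} {r : ℝ} (hr : r < ‖f‖)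
    (h : ∀ k ≠ n, ‖f k‖ ≤ r) : ‖f n‖ = ‖f‖ := by
  refine le_antisymm (norm_apply_le_s2 f n) ?_
  by_contra! hlt
  have : ‖f‖ ≤ max ‖f n‖ r := by
    refine norm_le_of_forall_norm_apply_le ((norm_nonneg _).trans (le_max_left _ _)) fun k => ?_
    rcases eq_or_ne k n with rfl | hk
    exacts [le_max_left _ _, (h k hk).trans (le_max_right _ _)]
  exact (max_lt hlt hr).not_ge this

end ZeroAtInftyContinuousMap

open ZeroAtInftyContinuousMap

section SequenceSpace

variable {Γ : Type*} [TopologicalSpace Γ] [DiscreteTopology Γ]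

lemma exists_norm_eq_one_apply_eq {u : C₀(Γ, ℂ)} (hu : ‖u‖ ≤ 1) (n : Γ) {lam : ℂ}
    (hlam : ‖lam‖ = 1) :
    ∃ y : C₀(Γ, ℂ), ‖y‖ = 1 ∧ y n = lam ∧ dist y u ≤ dist (u n) lam ∧
      ∀ k ≠ n, ‖y k‖ ≤ 1 - dist (u n) lam / 2 := by
  classical
  set δ := dist (u n) lam
  have huk : ∀ k, ‖u k‖ ≤ 1 := fun k => (norm_apply_le_s2 u k).trans hu
  have hδ : δ ≤ 2 := (dist_le_norm_add_norm _ _).trans (by linarith [huk n])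
  set c : ℂ := ((1 - δ / 2 : ℝ) : ℂ)
  have hc : ‖c‖ = 1 - δ / 2 := by
    rw [Complex.norm_real, Real.norm_of_nonneg (by linarith)]
  let y := c • u + (lam - c * u n) • stdBasis n
  have hyn : y n = lam := by simp [y, stdBasis_apply]
  have hyk : ∀ k ≠ n, y k = c * u k := fun k hk => by simp [y, stdBasis_apply, hk]
  have hyk_le : ∀ k ≠ n, ‖y k‖ ≤ 1 - δ / 2 := fun k hk => by
    rw [hyk k hk, norm_mul, hc]
    exact mul_le_of_le_one_right (by linarith) (huk k)
  refine ⟨y, le_antisymm ?_ ?_, hyn, ?_, hyk_le⟩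
  · refine norm_le_of_forall_norm_apply_le zero_le_one fun k => ?_
    rcases eq_or_ne k n with rfl | hk
    exacts [hyn ▸ hlam.le, (hyk_le k hk).trans (by linarith [dist_nonneg (x := u n) (y := lam)])]
  · exact hlam ▸ hyn ▸ norm_apply_le_s2 y n
  · rw [dist_eq_norm]
    refine norm_le_of_forall_norm_apply_le dist_nonneg fun k => ?_
    rcases eq_or_ne k n with rfl | hk
    · rw [ZeroAtInftyContinuousMap.sub_apply, hyn, ← dist_eq_norm, dist_comm]
    · have hδ₀ : 0 ≤ δ := dist_nonneg
      have : y k - u k = -((δ / 2 : ℝ) : ℂ) * u k := by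
        rw [hyk k hk]; push_cast [c]; ring
      rw [ZeroAtInftyContinuousMap.sub_apply, this, norm_mul, norm_neg, Complex.norm_real,
        Real.norm_of_nonneg (by linarith)]
      nlinarith [huk k, norm_nonneg (u k)]

theorem apply_eq_of_isometry_apply_eq_neg {X : Type*} [NormedAddCommGroup X] [NormedSpace ℝ X]
    {Δ : sphere (0 : C₀(Γ, ℂ)) 1 → sphere (0 : X) 1} (hΔiso : Isometry Δ)
    (hΔsurj : Function.Surjective Δ) {n : Γ} {lam : ℂ} (hlam : ‖lam‖ = 1)
    {x u : sphere (0 : C₀(Γ, ℂ)) 1} (hx : (x : C₀(Γ, ℂ)) n = -lam)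
    (hu : (Δ u : X) = -Δ x) : (u : C₀(Γ, ℂ)) n = lam := by
  by_contra hne
  set δ := dist ((u : C₀(Γ, ℂ)) n) lam
  have hδ : 0 < δ := dist_pos.2 hne
  have hΔdist : ∀ a b, dist (Δ a : X) (Δ b) = dist (a : C₀(Γ, ℂ)) b := fun a b => by
    rw [← Subtype.dist_eq, ← Subtype.dist_eq, hΔiso.dist_eq]
  obtain ⟨y, hy, hyn, hyu, hyk⟩ := exists_norm_eq_one_apply_eq (norm_eq_of_mem_sphere u).le n hlam
  let y' : sphere (0 : C₀(Γ, ℂ)) 1 := ⟨y, mem_sphere_zero_iff_norm.2 hy⟩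
  have h2 : 2 ≤ ‖(Δ y' : X) + Δ u‖ := by
    rw [hu, ← sub_eq_add_neg, ← dist_eq_norm, hΔdist]
    calc (2 : ℝ) = dist (y n) ((x : C₀(Γ, ℂ)) n) := by
          rw [hyn, hx, dist_eq_norm, sub_neg_eq_add, ← two_mul, norm_mul, hlam]; norm_num
      _ ≤ dist y' x := dist_apply_le _ _ n
  obtain ⟨v, hv⟩ := hΔsurj ⟨AffineMap.lineMap (Δ y' : X) (Δ u) (1 / 4 : ℝ),
    mem_sphere_zero_iff_norm.2 <| norm_lineMap_eq_one_of_two_le_norm_add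
      (norm_eq_of_mem_sphere _).le (norm_eq_of_mem_sphere _).le h2 (by norm_num) (by norm_num)⟩
  have hvX : (Δ v : X) = AffineMap.lineMap (Δ y' : X) (Δ u) (1 / 4 : ℝ) := congrArg Subtype.val hv
  have hvy : dist (v : C₀(Γ, ℂ)) y ≤ δ / 4 := by
    rw [← hΔdist v y', hvX, dist_lineMap_left, hΔdist, Real.norm_of_nonneg (by norm_num)]
    linarith
  have hvu : dist (v : C₀(Γ, ℂ)) u ≤ 3 / 4 * δ := by
    rw [← hΔdist v u, hvX, dist_lineMap_right, hΔdist, Real.norm_of_nonneg (by norm_num)]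
    nlinarith [dist_nonneg (x := (y' : C₀(Γ, ℂ))) (y := u)]
  have hvk : ∀ k ≠ n, ‖(v : C₀(Γ, ℂ)) k‖ ≤ 1 - δ / 4 := fun k hk => by
    have := norm_le_norm_add_const_of_dist_le ((dist_apply_le _ _ k).trans hvy)
    linarith [hyk k hk]
  have hvn : ‖(v : C₀(Γ, ℂ)) n‖ = 1 := by
    have hv1 : ‖(v : C₀(Γ, ℂ))‖ = 1 := norm_eq_of_mem_sphere v
    rw [norm_apply_eq_norm_of_forall_ne_le (by linarith) hvk, hv1]
  refine (norm_lt_of_dist_le_mul_of_dist_le_one_sub_mul hlam.le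
    ((norm_apply_le_s2 _ n).trans (norm_eq_of_mem_sphere u).le) (Ne.symm hne) (t := 1 / 4)
    (by norm_num) (by norm_num) ?_ ?_).ne hvn
  · calc dist lam ((v : C₀(Γ, ℂ)) n) ≤ dist (v : C₀(Γ, ℂ)) y := by
          rw [← hyn, dist_comm]; exact dist_apply_le _ _ n
      _ ≤ 1 / 4 * dist lam ((u : C₀(Γ, ℂ)) n) := by rw [dist_comm lam]; linarith
  · exact (dist_apply_le _ _ n).trans (hvu.trans_eq (by rw [dist_comm lam]; ring))

end SequenceSpace

theorem supp_on_antipodal_face_general {Γ : Type*} [TopologicalSpace Γ] [DiscreteTopology Γ]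
    {X : Type*} [NormedAddCommGroup X] [NormedSpace ℂ X]
    (Δ : sphere (0 : C₀(Γ, ℂ)) 1 → sphere (0 : X) 1)
    (hΔiso : Isometry Δ) (hΔsurj : Function.Surjective Δ)
    (n : Γ) (lam : ℂ) (hlam : ‖lam‖ = 1)
    (φ : X →L[ℂ] ℂ)
    (hface : {z : X | ‖z‖ = 1 ∧ φ z = 1} =
      (fun w : sphere (0 : X) 1 => (w : X)) ''
        (Δ '' {x : sphere (0 : C₀(Γ, ℂ)) 1 | (x : C₀(Γ, ℂ)) n = lam})) :
    ∀ x : sphere (0 : C₀(Γ, ℂ)) 1, (x : C₀(Γ, ℂ)) n = -lam → φ (Δ x) = -1 := by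
  intro x hx
  obtain ⟨u, hu⟩ := hΔsurj ⟨-(Δ x : X), by simp⟩
  have huX : (Δ u : X) = -Δ x := congrArg Subtype.val hu
  have hmem : -(Δ x : X) ∈ {z : X | ‖z‖ = 1 ∧ φ z = 1} :=
    hface ▸ ⟨Δ u, ⟨u, apply_eq_of_isometry_apply_eq_neg hΔiso hΔsurj hlam hx huX, rfl⟩, huX⟩
  rw [← neg_eq_iff_eq_neg, ← map_neg]
  exact hmem.2

/-- If `φ` is a norm-one functional whose face `{φ = 1}` on the sphere equals the image of
`A(n,λ)` under a surjective isometry `Δ`, then `φ(Δ x) = -1` for all `x ∈ A(n,-λ)`. -/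
theorem supp_on_antipodal_face {Γ : Type*} [TopologicalSpace Γ] [DiscreteTopology Γ]
    [DecidableEq Γ] [Infinite Γ]
    {X : Type*} [NormedAddCommGroup X] [NormedSpace ℂ X] [CompleteSpace X]
    (Δ : sphere (0 : C₀(Γ, ℂ)) 1 → sphere (0 : X) 1)
    (hΔiso : Isometry Δ) (hΔsurj : Function.Surjective Δ)
    (n : Γ) (lam : ℂ) (hlam : ‖lam‖ = 1)
    (φ : X →L[ℂ] ℂ) (hφ : ‖φ‖ = 1)
    (hface : {z : X | ‖z‖ = 1 ∧ φ z = 1} =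
      (fun w : sphere (0 : X) 1 => (w : X)) ''
        (Δ '' {x : sphere (0 : C₀(Γ, ℂ)) 1 | (x : C₀(Γ, ℂ)) n = lam})) :
    ∀ x : sphere (0 : C₀(Γ, ℂ)) 1, (x : C₀(Γ, ℂ)) n = -lam → φ (Δ x) = -1 :=
  supp_on_antipodal_face_general Δ hΔiso hΔsurj n lam hlam φ hface
end

section
/- Let X be a complex Banach space and Δ : S(c₀(Γ)) → S(X) a surjective isometry. For n₀ ∈ Γ and μ, ν ∈ 𝕋 with μ ≠ ν, the sets supp(n₀,ν) and supp(n₀,μ) are disjoint. -/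
open ZeroAtInfty Metric

lemma norm_stdBasis {Γ : Type*} [TopologicalSpace Γ] [DiscreteTopology Γ] [DecidableEq Γ]
    (n : Γ) : ‖stdBasis (Γ := Γ) n‖ = 1 := by
  rw [← ZeroAtInftyContinuousMap.norm_toBCF_eq_norm]
  apply le_antisymm
  · refine BoundedContinuousFunction.norm_le (by norm_num) |>.2 fun k => ?_
    simp only [ZeroAtInftyContinuousMap.toBCF_apply, stdBasis]
    dsimp
    split <;> simp
  · have := BoundedContinuousFunction.norm_coe_le_norm (stdBasis (Γ := Γ) n).toBCF n
    simpa [stdBasis] using this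

/-- For a fixed coordinate `n₀` and distinct unimodular scalars `μ ≠ ν`, the support sets
`supp(n₀,ν)` and `supp(n₀,μ)` are disjoint. -/
theorem supp_distinct_scalars {Γ : Type*} [TopologicalSpace Γ] [DiscreteTopology Γ]
    [DecidableEq Γ] [Infinite Γ]
    {X : Type*} [NormedAddCommGroup X] [NormedSpace ℂ X] [CompleteSpace X]
    (Δ : sphere (0 : C₀(Γ, ℂ)) 1 → sphere (0 : X) 1)
    (hΔiso : Isometry Δ) (hΔsurj : Function.Surjective Δ)
    (n₀ : Γ) (μ ν : ℂ) (hμ : ‖μ‖ = 1) (hν : ‖ν‖ = 1) (hμν : μ ≠ ν) :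
    {φ : X →L[ℂ] ℂ | ‖φ‖ = 1 ∧ {z : X | ‖z‖ = 1 ∧ φ z = 1} =
        (fun w : sphere (0 : X) 1 => (w : X)) ''
          (Δ '' {x : sphere (0 : C₀(Γ, ℂ)) 1 | (x : C₀(Γ, ℂ)) n₀ = ν})} ∩
      {φ : X →L[ℂ] ℂ | ‖φ‖ = 1 ∧ {z : X | ‖z‖ = 1 ∧ φ z = 1} =
        (fun w : sphere (0 : X) 1 => (w : X)) ''
          (Δ '' {x : sphere (0 : C₀(Γ, ℂ)) 1 | (x : C₀(Γ, ℂ)) n₀ = μ})} = ∅ := by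
  rw [Set.eq_empty_iff_forall_notMem]
  rintro φ ⟨⟨-, h1⟩, ⟨-, h2⟩⟩
  have hxnorm : ‖(ν • stdBasis n₀ : C₀(Γ, ℂ))‖ = 1 :=
    calc ‖(ν • stdBasis n₀ : C₀(Γ, ℂ))‖ = ‖ν‖ * ‖stdBasis (Γ := Γ) n₀‖ :=
          norm_smul ν (stdBasis n₀)
      _ = 1 := by rw [hν, norm_stdBasis, one_mul]
  set x : sphere (0 : C₀(Γ, ℂ)) 1 := ⟨ν • stdBasis n₀, by
    simpa [mem_sphere_iff_norm] using hxnorm⟩ with hxdef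
  have hxν : (x : C₀(Γ, ℂ)) n₀ = ν := by
    simp [hxdef, stdBasis]
  have hmem : ((Δ x : X) ∈ {z : X | ‖z‖ = 1 ∧ φ z = 1}) := by
    rw [h1]
    exact ⟨Δ x, ⟨x, hxν, rfl⟩, rfl⟩
  rw [h2] at hmem
  obtain ⟨w, ⟨y, hyμ, hwy⟩, hwx⟩ := hmem
  have hΔinj : Function.Injective Δ := hΔiso.injective
  have : y = x := hΔinj (by rw [hwy]; exact Subtype.ext hwx)
  simp only [Set.mem_setOf_eq, this, hxν] at hyμ
  exact hμν hyμ.symm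
end
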